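/- Let u : ℝ → ℝ be twice continuously differentiable, satisfying u''(x) = x·u(x) + 2·u(x)³ for all real x, with u(x) → 0, u'(x) → 0 and x·u(x)² → 0 as x → ∞, and such that t ↦ u(t)² is integrable on (x, ∞) for every real x. Suppose u(x) > 0 and u'(x) < 0 for all x ≥ 0, and that √x · h(x) → 0 as x → ∞, where h(x) = ∫ₓ^∞ u(t)² dt. Then for every x ≥ 0: u(x)²·h(x)² + 2·u(x)·u'(x)·h(x) + u(x)⁴ > 0. -/

import Mathlib

/-!
Write `h(x) = ∫ₓ^∞ u²`, so that `h' = -u²`. Along a Painlevé II solution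
`u'² - x u² - u⁴ - h` has derivative zero and tends to `0`, giving the first integral
`u'² = x u² + u⁴ + h`. The quantity in question is `u² G` with `G = h² + 2 (u'/u) h + u²`,
and the first integral turns `G'` into `-2 h² / u² < 0`. Finally `G → 0`: the only delicate
term is `(u'/u) h`, which is bounded by `u'²` because `h + u u'` has derivative
`u'² + (x - 1) u² + 2 u⁴ ≥ 0` on `[1, ∞)` and tends to `0`, hence `0 ≤ h ≤ -u u'` there.
So `G` decreases strictly to `0` on `[0, ∞)`, and is positive.
-/

open MeasureTheory Filter Set Topology

section TailIntegral

variable {E : Type*} [NormedAddCommGroup E] [NormedSpace ℝ E] {f : ℝ → E}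

theorem hasDerivAt_integral_Ioi [CompleteSpace E] {b : ℝ} (hf : Continuous f)
    (hb : IntegrableOn f (Ioi b)) (x : ℝ) : HasDerivAt (fun x => ∫ t in Ioi x, f t) (-f x) x := by
  have hsplit :
      (fun x => ∫ t in Ioi x, f t) = fun x => (∫ t in x..b, f t) + ∫ t in Ioi b, f t :=
    funext fun x =>
      (intervalIntegral.integral_interval_add_Ioi' (hf.intervalIntegrable x b) hb).symm
  rw [hsplit]
  exact (intervalIntegral.integral_hasDerivAt_left (hf.intervalIntegrable x b)
    (hf.stronglyMeasurableAtFilter _ _) hf.continuousAt).add_const _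

theorem tendsto_integral_Ioi_atTop_zero {a : ℝ} (hf : IntegrableOn f (Ioi a)) :
    Tendsto (fun x => ∫ t in Ioi x, f t) atTop (𝓝 0) := by
  have hlim :=
    (intervalIntegral_tendsto_integral_Ioi a hf tendsto_id).const_sub (∫ t in Ioi a, f t)
  rw [sub_self] at hlim
  refine hlim.congr' ?_
  filter_upwards [eventually_ge_atTop a] with x hx
  rw [id, ← intervalIntegral.integral_Ioi_sub_Ioi hf hx, sub_sub_cancel]

end TailIntegral

section Monotone

variable {α β : Type*} [LinearOrder α] [PartialOrder β] [TopologicalSpace β]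
  [OrderClosedTopology β] {f : α → β} {a : α} {l : β}

theorem MonotoneOn.le_of_tendsto_atTop (hf : MonotoneOn f (Ici a))
    (hl : Tendsto f atTop (𝓝 l)) : f a ≤ l :=
  have : Nonempty α := ⟨a⟩
  ge_of_tendsto hl <| by
    filter_upwards [eventually_ge_atTop a] with x hx using hf self_mem_Ici hx hx

theorem AntitoneOn.le_of_tendsto_atTop (hf : AntitoneOn f (Ici a))
    (hl : Tendsto f atTop (𝓝 l)) : l ≤ f a :=
  MonotoneOn.le_of_tendsto_atTop (β := βᵒᵈ) hf hl

theorem StrictAntiOn.lt_of_tendsto_atTop [NoMaxOrder α] (hf : StrictAntiOn f (Ici a))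
    (hl : Tendsto f atTop (𝓝 l)) : l < f a := by
  obtain ⟨b, hab⟩ := exists_gt a
  calc l ≤ f b := (hf.antitoneOn.mono (Ici_subset_Ici.2 hab.le)).le_of_tendsto_atTop hl
    _ < f a := hf self_mem_Ici hab.le hab

end Monotone

section Calculus

variable {f f' : ℝ → ℝ} {a l : ℝ}

theorem le_of_tendsto_of_hasDerivAt_nonneg (hf : ∀ x ∈ Ici a, HasDerivAt f (f' x) x)
    (hf' : ∀ x ∈ Ioi a, 0 ≤ f' x) (hl : Tendsto f atTop (𝓝 l)) : f a ≤ l := by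
  refine MonotoneOn.le_of_tendsto_atTop ?_ hl
  refine monotoneOn_of_hasDerivWithinAt_nonneg (f' := f') (convex_Ici a)
    (fun x hx => (hf x hx).continuousAt.continuousWithinAt) (fun x hx => ?_) ?_
  · rw [interior_Ici] at hx
    exact (hf x (mem_Ici_of_Ioi hx)).hasDerivWithinAt
  · simpa only [interior_Ici] using hf'

theorem lt_of_tendsto_of_hasDerivAt_neg (hf : ∀ x ∈ Ici a, HasDerivAt f (f' x) x)
    (hf' : ∀ x ∈ Ioi a, f' x < 0) (hl : Tendsto f atTop (𝓝 l)) : l < f a := by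
  refine StrictAntiOn.lt_of_tendsto_atTop ?_ hl
  refine strictAntiOn_of_hasDerivWithinAt_neg (f' := f') (convex_Ici a)
    (fun x hx => (hf x hx).continuousAt.continuousWithinAt) (fun x hx => ?_) ?_
  · rw [interior_Ici] at hx
    exact (hf x (mem_Ici_of_Ioi hx)).hasDerivWithinAt
  · simpa only [interior_Ici] using hf'

theorem eq_of_hasDerivAt_zero_of_tendsto {E : Type*} [NormedAddCommGroup E] [NormedSpace ℝ E]
    {f : ℝ → E} {l : E} (hf : ∀ x, HasDerivAt f 0 x) (hl : Tendsto f atTop (𝓝 l)) (x : ℝ) :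
    f x = l :=
  tendsto_nhds_unique (tendsto_const_nhds.congr fun y =>
    is_const_of_deriv_eq_zero (fun z => (hf z).differentiableAt) (fun z => (hf z).deriv) x y) hl

end Calculus

namespace PainleveII

variable {u h : ℝ → ℝ}

theorem deriv_sq_eq (hu : Differentiable ℝ u)
    (hode : ∀ x, HasDerivAt (deriv u) (x * u x + 2 * u x ^ 3) x)
    (hh : ∀ x, HasDerivAt h (-(u x ^ 2)) x) (hu0 : Tendsto u atTop (𝓝 0))
    (hu'0 : Tendsto (deriv u) atTop (𝓝 0)) (hxu : Tendsto (fun x => x * u x ^ 2) atTop (𝓝 0))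
    (hh0 : Tendsto h atTop (𝓝 0)) (x : ℝ) :
    deriv u x ^ 2 = x * u x ^ 2 + u x ^ 4 + h x := by
  have hconst : ∀ y, HasDerivAt (fun y => deriv u y ^ 2 - y * u y ^ 2 - u y ^ 4 - h y) 0 y := by
    intro y
    refine HasDerivAt.congr_deriv ((((hode y).pow 2).sub ((hasDerivAt_id y).mul
      ((hu y).hasDerivAt.pow 2))).sub ((hu y).hasDerivAt.pow 4) |>.sub (hh y)) ?_
    simp only [id_eq, Pi.pow_apply]
    ring
  have hlim : Tendsto (fun y => deriv u y ^ 2 - y * u y ^ 2 - u y ^ 4 - h y) atTop (𝓝 0) := by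
    simpa using (((hu'0.pow 2).sub hxu).sub (hu0.pow 4)).sub hh0
  linarith [eq_of_hasDerivAt_zero_of_tendsto hconst hlim x]

theorem add_mul_deriv_nonpos (hu : Differentiable ℝ u)
    (hode : ∀ x, HasDerivAt (deriv u) (x * u x + 2 * u x ^ 3) x)
    (hh : ∀ x, HasDerivAt h (-(u x ^ 2)) x) (hu0 : Tendsto u atTop (𝓝 0))
    (hu'0 : Tendsto (deriv u) atTop (𝓝 0)) (hh0 : Tendsto h atTop (𝓝 0)) {x : ℝ} (hx : 1 ≤ x) :
    h x + u x * deriv u x ≤ 0 := by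
  refine le_of_tendsto_of_hasDerivAt_nonneg (f := fun y => h y + u y * deriv u y)
    (fun y _ => (hh y).add ((hu y).hasDerivAt.mul (hode y))) (fun y hy => ?_)
    (by simpa using hh0.add (hu0.mul hu'0))
  have hy1 : 1 ≤ y := hx.trans (le_of_lt hy)
  nlinarith [sq_nonneg (deriv u y), sq_nonneg (u y), pow_nonneg (sq_nonneg (u y)) 2]

theorem tendsto_deriv_div_mul (hu : Differentiable ℝ u)
    (hode : ∀ x, HasDerivAt (deriv u) (x * u x + 2 * u x ^ 3) x)
    (hh : ∀ x, HasDerivAt h (-(u x ^ 2)) x) (hu0 : Tendsto u atTop (𝓝 0))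
    (hu'0 : Tendsto (deriv u) atTop (𝓝 0)) (hh0 : Tendsto h atTop (𝓝 0)) :
    Tendsto (fun x => deriv u x / u x * h x) atTop (𝓝 0) := by
  refine squeeze_zero_norm' ?_ (by simpa using hu'0.pow 2)
  filter_upwards [eventually_ge_atTop 1] with x hx
  have hh_nonneg : 0 ≤ h x := by
    simpa using le_of_tendsto_of_hasDerivAt_nonneg (fun y _ => (hh y).neg)
      (fun y _ => by simp only [neg_neg]; positivity) hh0.neg
  have hh_le : h x ≤ |u x| * |deriv u x| := by
    rw [← abs_mul]
    linarith [add_mul_deriv_nonpos hu hode hh hu0 hu'0 hh0 hx, neg_le_abs (u x * deriv u x)]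
  rcases eq_or_ne (u x) 0 with hux | hux
  · simp [hux, sq_nonneg]
  calc ‖deriv u x / u x * h x‖ = |deriv u x| / |u x| * h x := by
        rw [Real.norm_eq_abs, abs_mul, abs_div, abs_of_nonneg hh_nonneg]
    _ ≤ |deriv u x| / |u x| * (|u x| * |deriv u x|) := by gcongr
    _ = deriv u x ^ 2 := by field_simp; rw [sq_abs]

theorem hasDerivAt_sq_add_deriv_div_mul_add_sq (hu : Differentiable ℝ u)
    (hode : ∀ x, HasDerivAt (deriv u) (x * u x + 2 * u x ^ 3) x)
    (hh : ∀ x, HasDerivAt h (-(u x ^ 2)) x) {x : ℝ} (hux : u x ≠ 0)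
    (hfirst : deriv u x ^ 2 = x * u x ^ 2 + u x ^ 4 + h x) :
    HasDerivAt (fun x => h x ^ 2 + 2 * (deriv u x / u x * h x) + u x ^ 2)
      (-2 * h x ^ 2 / u x ^ 2) x := by
  refine HasDerivAt.congr_deriv (((hh x).pow 2).add ((((hode x).div (hu x).hasDerivAt hux).mul
    (hh x)).const_mul 2) |>.add ((hu x).hasDerivAt.pow 2)) ?_
  simp only [Pi.div_apply]
  field_simp
  linear_combination (-2 * h x) * hfirst

end PainleveII

theorem painleve_positivity_general (u : ℝ → ℝ) (hu : ContDiff ℝ 2 u)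
    (hode : ∀ x : ℝ, deriv (deriv u) x = x * u x + 2 * (u x) ^ 3)
    (hu0 : Tendsto u atTop (nhds 0))
    (hu'0 : Tendsto (deriv u) atTop (nhds 0))
    (hxu : Tendsto (fun x : ℝ => x * (u x) ^ 2) atTop (nhds 0))
    (hint : ∀ x : ℝ, IntegrableOn (fun t : ℝ => (u t) ^ 2) (Ioi x))
    (hupos : ∀ x : ℝ, 0 ≤ x → 0 < u x) :
    ∀ x : ℝ, 0 ≤ x →
      0 < (u x) ^ 2 * (∫ t in Ioi x, (u t) ^ 2) ^ 2 +
        2 * u x * deriv u x * (∫ t in Ioi x, (u t) ^ 2) + (u x) ^ 4 := by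
  intro x₀ hx₀
  set h : ℝ → ℝ := fun x => ∫ t in Ioi x, u t ^ 2
  have hdiff : Differentiable ℝ u := hu.differentiable (by norm_num)
  have hode' : ∀ x, HasDerivAt (deriv u) (x * u x + 2 * u x ^ 3) x := fun x =>
    hode x ▸ (by simpa using hu.differentiable_iteratedDeriv 1 (by norm_num) x)
  have hh : ∀ x, HasDerivAt h (-(u x ^ 2)) x :=
    hasDerivAt_integral_Ioi (hu.continuous.pow 2) (hint 0)
  have hh0 : Tendsto h atTop (𝓝 0) := tendsto_integral_Ioi_atTop_zero (hint 0)
  have hh_pos : ∀ x, 0 ≤ x → 0 < h x := fun x hx =>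
    lt_of_tendsto_of_hasDerivAt_neg (fun y _ => hh y)
      (fun y hy => neg_neg_of_pos (pow_pos (hupos y (hx.trans (le_of_lt hy))) 2)) hh0
  have hG : 0 < h x₀ ^ 2 + 2 * (deriv u x₀ / u x₀ * h x₀) + u x₀ ^ 2 := by
    refine lt_of_tendsto_of_hasDerivAt_neg (a := x₀)
      (fun x hx => PainleveII.hasDerivAt_sq_add_deriv_div_mul_add_sq hdiff hode' hh
        (hupos x (hx₀.trans hx)).ne' (PainleveII.deriv_sq_eq hdiff hode' hh hu0 hu'0 hxu hh0 x))
      (fun x hx => ?_) ?_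
    · have hx' : 0 ≤ x := hx₀.trans (le_of_lt hx)
      exact div_neg_of_neg_of_pos (mul_neg_of_neg_of_pos (by norm_num) (pow_pos (hh_pos x hx') 2))
        (pow_pos (hupos x hx') 2)
    · have hT := PainleveII.tendsto_deriv_div_mul hdiff hode' hh hu0 hu'0 hh0
      simpa using ((hh0.pow 2).add (hT.const_mul 2)).add (hu0.pow 2)
  have hux := hupos x₀ hx₀
  calc 0 < u x₀ ^ 2 * (h x₀ ^ 2 + 2 * (deriv u x₀ / u x₀ * h x₀) + u x₀ ^ 2) := by positivity
    _ = _ := by field_simp; ring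

/-- The key positivity: for the positive decreasing solution of Painlevé II with the
decay `√x·h(x) → 0`, one has `u(x)²·h(x)² + 2·u(x)·u'(x)·h(x) + u(x)⁴ > 0` for all
`x ≥ 0`, where `h(x) = ∫ₓ^∞ u(t)² dt`. -/
theorem painleve_positivity (u : ℝ → ℝ) (hu : ContDiff ℝ 2 u)
    (hode : ∀ x : ℝ, deriv (deriv u) x = x * u x + 2 * (u x) ^ 3)
    (hu0 : Tendsto u atTop (nhds 0))
    (hu'0 : Tendsto (deriv u) atTop (nhds 0))
    (hxu : Tendsto (fun x : ℝ => x * (u x) ^ 2) atTop (nhds 0))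
    (hint : ∀ x : ℝ, IntegrableOn (fun t : ℝ => (u t) ^ 2) (Ioi x))
    (hupos : ∀ x : ℝ, 0 ≤ x → 0 < u x)
    (hu'neg : ∀ x : ℝ, 0 ≤ x → deriv u x < 0)
    (hdecay : Tendsto (fun x : ℝ => Real.sqrt x * ∫ t in Ioi x, (u t) ^ 2)
      atTop (nhds 0)) :
    ∀ x : ℝ, 0 ≤ x →
      0 < (u x) ^ 2 * (∫ t in Ioi x, (u t) ^ 2) ^ 2 +
        2 * u x * deriv u x * (∫ t in Ioi x, (u t) ^ 2) + (u x) ^ 4 :=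
  painleve_positivity_general u hu hode hu0 hu'0 hxu hint hupos
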